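/- arXiv:2512.02435 — 8 statements merged into one kernel-verified Lean document; each statement's English description precedes it below -/
import Mathlib

section
/- Let M_src = (S, A, P_src, r, ρ, γ) and M_tar = (S, A, P_tar, r, ρ, γ) be two MDPs differing only in transition dynamics, with reward bounded by |r(s,a)| ≤ r_max and discount γ ∈ [0,1). For any policy π, the difference in discounted returns satisfies |J_{M_tar}(π) − J_{M_src}(π)| ≤ (2γ r_max / (1−γ)²) · sup_{s,a} D_TV(P_src(·|s,a), P_tar(·|s,a)). -/
/-- Total variation distance between two finitely-supported distributions. -/
noncomputable def Dtv {S : Type} [Fintype S] (p q : S → ℝ) : ℝ := (1 / 2) * ∑ s', |p s' - q s'|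

private lemma wsum_abs_le {S : Type} [Fintype S] (w f : S → ℝ)
    (hw : ∀ s, 0 ≤ w s) (hsum : ∑ s, w s = 1) (C : ℝ) (hf : ∀ s, |f s| ≤ C) :
    |∑ s, w s * f s| ≤ C := by
  calc |∑ s, w s * f s| ≤ ∑ s, |w s * f s| := Finset.abs_sum_le_sum_abs _ _
  _ = ∑ s, w s * |f s| := by
      refine Finset.sum_congr rfl fun s _ => ?_
      rw [abs_mul, abs_of_nonneg (hw s)]
  _ ≤ ∑ s, w s * C := Finset.sum_le_sum (fun s _ => mul_le_mul_of_nonneg_left (hf s) (hw s))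
  _ = C := by rw [← Finset.sum_mul, hsum, one_mul]

/-- Performance difference of a fixed policy across two MDPs differing only in
dynamics is bounded by `2 γ r_max / (1-γ)²` times the sup TV distance of the kernels. -/
theorem stmt_0
    {S A : Type} [Fintype S] [Fintype A] [Nonempty S] [Nonempty A]
    (Psrc Ptar : S → A → S → ℝ)
    (hPsrc : ∀ s a, (∀ s', 0 ≤ Psrc s a s') ∧ ∑ s', Psrc s a s' = 1)
    (hPtar : ∀ s a, (∀ s', 0 ≤ Ptar s a s') ∧ ∑ s', Ptar s a s' = 1)
    (r : S → A → ℝ) (rmax : ℝ) (hr : ∀ s a, |r s a| ≤ rmax)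
    (ρ : S → ℝ) (hρ0 : ∀ s, 0 ≤ ρ s) (hρ1 : ∑ s, ρ s = 1)
    (γ : ℝ) (hγ0 : 0 ≤ γ) (hγ1 : γ < 1)
    (pol : S → A → ℝ)
    (hpol : ∀ s, (∀ a, 0 ≤ pol s a) ∧ ∑ a, pol s a = 1)
    (Vsrc Vtar : S → ℝ)
    (hVsrc : ∀ s, Vsrc s = ∑ a, pol s a * (r s a + γ * ∑ s', Psrc s a s' * Vsrc s'))
    (hVtar : ∀ s, Vtar s = ∑ a, pol s a * (r s a + γ * ∑ s', Ptar s a s' * Vtar s'))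
    (Jsrc Jtar : ℝ)
    (hJsrc : Jsrc = ∑ s, ρ s * Vsrc s)
    (hJtar : Jtar = ∑ s, ρ s * Vtar s) :
    |Jtar - Jsrc| ≤ (2 * γ * rmax / (1 - γ) ^ 2) *
      ⨆ p : S × A, Dtv (Psrc p.1 p.2) (Ptar p.1 p.2) := by
  classical
  set D := ⨆ p : S × A, Dtv (Psrc p.1 p.2) (Ptar p.1 p.2) with hDdef
  have hγpos : 0 < 1 - γ := by linarith
  have hrmax : 0 ≤ rmax :=
    le_trans (abs_nonneg _) (hr (Classical.arbitrary S) (Classical.arbitrary A))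
  have hDle : ∀ s a, Dtv (Psrc s a) (Ptar s a) ≤ D := by
    intro s a
    exact le_ciSup (f := fun p : S × A => Dtv (Psrc p.1 p.2) (Ptar p.1 p.2))
      (Set.Finite.bddAbove (Set.finite_range _)) (⟨s, a⟩ : S × A)
  have hDtv0 : ∀ s a, 0 ≤ Dtv (Psrc s a) (Ptar s a) := by
    intro s a
    unfold Dtv
    positivity
  have hD0 : 0 ≤ D := le_trans (hDtv0 (Classical.arbitrary S) (Classical.arbitrary A))
    (hDle _ _)
  -- bound on Vtar
  obtain ⟨s1, -, hs1⟩ := Finset.exists_max_image Finset.univ (fun s => |Vtar s|)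
    ⟨Classical.arbitrary S, Finset.mem_univ _⟩
  set B := |Vtar s1| with hBdef
  have hB0 : 0 ≤ B := abs_nonneg _
  have hBle : ∀ s, |Vtar s| ≤ B := fun s => hs1 s (Finset.mem_univ s)
  have hBrec : B ≤ rmax + γ * B := by
    have h1 : |Vtar s1| ≤ rmax + γ * B := by
      rw [hVtar s1]
      refine wsum_abs_le _ _ (hpol s1).1 (hpol s1).2 _ fun a => ?_
      have hinner : |∑ s', Ptar s1 a s' * Vtar s'| ≤ B :=
        wsum_abs_le _ _ (hPtar s1 a).1 (hPtar s1 a).2 _ hBle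
      calc |r s1 a + γ * ∑ s', Ptar s1 a s' * Vtar s'|
          ≤ |r s1 a| + |γ * ∑ s', Ptar s1 a s' * Vtar s'| := abs_add_le _ _
        _ ≤ rmax + γ * B := by
            rw [abs_mul, abs_of_nonneg hγ0]
            exact add_le_add (hr s1 a) (mul_le_mul_of_nonneg_left hinner hγ0)
    exact h1
  have hBbound : B ≤ rmax / (1 - γ) := by
    rw [le_div_iff₀ hγpos]; nlinarith
  -- bound on the difference
  obtain ⟨s0, -, hs0⟩ := Finset.exists_max_image Finset.univ (fun s => |Vtar s - Vsrc s|)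
    ⟨Classical.arbitrary S, Finset.mem_univ _⟩
  obtain ⟨E, hEdef⟩ : ∃ E, E = |Vtar s0 - Vsrc s0| := ⟨_, rfl⟩
  rw [← hEdef] at hs0
  have hEle : ∀ s, |Vtar s - Vsrc s| ≤ E := fun s => hs0 s (Finset.mem_univ s)
  have hErec : E ≤ γ * (2 * D * B + E) := by
    have hkey : Vtar s0 - Vsrc s0 = ∑ a, pol s0 a *
        (γ * ((∑ s', (Ptar s0 a s' - Psrc s0 a s') * Vtar s')
          + ∑ s', Psrc s0 a s' * (Vtar s' - Vsrc s'))) := by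
      rw [hVtar s0, hVsrc s0, ← Finset.sum_sub_distrib]
      refine Finset.sum_congr rfl fun a _ => ?_
      rw [← Finset.sum_add_distrib]
      rw [show (∑ s', ((Ptar s0 a s' - Psrc s0 a s') * Vtar s'
          + Psrc s0 a s' * (Vtar s' - Vsrc s'))) =
          ∑ s', (Ptar s0 a s' * Vtar s' - Psrc s0 a s' * Vsrc s') by
        refine Finset.sum_congr rfl fun s' _ => ?_; ring]
      rw [Finset.sum_sub_distrib]
      ring
    conv_lhs => rw [hEdef, hkey]
    refine wsum_abs_le _ _ (hpol s0).1 (hpol s0).2 _ fun a => ?_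
    rw [abs_mul, abs_of_nonneg hγ0]
    refine mul_le_mul_of_nonneg_left ?_ hγ0
    have h1 : |∑ s', (Ptar s0 a s' - Psrc s0 a s') * Vtar s'| ≤ 2 * D * B := by
      calc |∑ s', (Ptar s0 a s' - Psrc s0 a s') * Vtar s'|
          ≤ ∑ s', |(Ptar s0 a s' - Psrc s0 a s') * Vtar s'| :=
            Finset.abs_sum_le_sum_abs _ _
        _ ≤ ∑ s', |Psrc s0 a s' - Ptar s0 a s'| * B := by
            refine Finset.sum_le_sum fun s' _ => ?_
            rw [abs_mul, abs_sub_comm]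
            exact mul_le_mul_of_nonneg_left (hBle s') (abs_nonneg _)
        _ = 2 * Dtv (Psrc s0 a) (Ptar s0 a) * B := by
            rw [← Finset.sum_mul]; unfold Dtv; ring
        _ ≤ 2 * D * B := by
            have := hDle s0 a; nlinarith
    have h2 : |∑ s', Psrc s0 a s' * (Vtar s' - Vsrc s')| ≤ E :=
      wsum_abs_le _ _ (hPsrc s0 a).1 (hPsrc s0 a).2 _ hEle
    exact le_trans (abs_add_le _ _) (add_le_add h1 h2)
  have hEbound : E ≤ (2 * γ * rmax / (1 - γ) ^ 2) * D := by
    have h1 : (1 - γ) * E ≤ 2 * γ * D * B := by nlinarith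
    have h2 : B * (1 - γ) ≤ rmax := by
      have := hBbound; rw [le_div_iff₀ hγpos] at this; linarith
    rw [div_mul_eq_mul_div, le_div_iff₀ (by positivity : (0:ℝ) < (1-γ)^2)]
    nlinarith [mul_le_mul_of_nonneg_left h2 (mul_nonneg (mul_nonneg (by norm_num : (0:ℝ) ≤ 2) hγ0) hD0)]
  have hJ : |Jtar - Jsrc| ≤ E := by
    rw [hJtar, hJsrc, ← Finset.sum_sub_distrib]
    rw [show (∑ s, (ρ s * Vtar s - ρ s * Vsrc s)) = ∑ s, ρ s * (Vtar s - Vsrc s) by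
      refine Finset.sum_congr rfl fun s _ => ?_; ring]
    exact wsum_abs_le _ _ hρ0 hρ1 _ hEle
  exact le_trans hJ hEbound
end

section
/- Let M_src and M_tar be MDPs differing only in dynamics, with rewards bounded by r_max and discount γ ∈ [0,1). Let π*_tar be an optimal policy in M_tar, π*_src an optimal policy in M_src, and π*_insrc any fixed policy (the in-sample optimal policy), with ε_opt := J_{M_src}(π*_src) − J_{M_src}(π*_insrc). Then for any policy π, |J_{M_tar}(π) − J_{M_tar}(π*_tar)| ≤ |J_{M_src}(π) − J_{M_src}(π*_insrc)| + ((2γ+2) r_max / (1−γ)²) · sup_{s,a} D_TV(P_src(·|s,a), P_tar(·|s,a)) + ε_opt. -/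
def IsPolicy {S A : Type} [Fintype A] (pol : S → A → ℝ) : Prop :=
  ∀ s, (∀ a, 0 ≤ pol s a) ∧ ∑ a, pol s a = 1


lemma val_bound {S A : Type} [Fintype S] [Fintype A] [Nonempty S]
    (P : S → A → S → ℝ) (hP : ∀ s a, (∀ s', 0 ≤ P s a s') ∧ ∑ s', P s a s' = 1)
    (pol : S → A → ℝ) (hpol : IsPolicy pol)
    (r : S → A → ℝ) (rmax : ℝ) (hr : ∀ s a, |r s a| ≤ rmax)
    (γ : ℝ) (hγ0 : 0 ≤ γ) (hγ1 : γ < 1)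
    (V : S → ℝ)
    (hV : ∀ s, V s = ∑ a, pol s a * (r s a + γ * ∑ s', P s a s' * V s')) :
    ∀ s, |V s| ≤ rmax / (1 - γ) := by
  have h1γ : (0:ℝ) < 1 - γ := by linarith
  obtain ⟨s0, -, hs0⟩ := Finset.exists_max_image (Finset.univ : Finset S)
    (fun s => |V s|) Finset.univ_nonempty
  have key : |V s0| ≤ rmax + γ * |V s0| := by
    have h1 : ∀ a, |r s0 a + γ * ∑ s', P s0 a s' * V s'| ≤ rmax + γ * |V s0| := by
      intro a
      have h2 : |∑ s', P s0 a s' * V s'| ≤ |V s0| := by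
        calc |∑ s', P s0 a s' * V s'| ≤ ∑ s', |P s0 a s' * V s'| :=
              Finset.abs_sum_le_sum_abs _ _
          _ = ∑ s', P s0 a s' * |V s'| := by
              refine Finset.sum_congr rfl fun s' _ => ?_
              rw [abs_mul, abs_of_nonneg ((hP s0 a).1 s')]
          _ ≤ ∑ s', P s0 a s' * |V s0| := by
              refine Finset.sum_le_sum fun s' _ => ?_
              exact mul_le_mul_of_nonneg_left (hs0 s' (Finset.mem_univ _)) ((hP s0 a).1 s')
          _ = |V s0| := by rw [← Finset.sum_mul, (hP s0 a).2, one_mul]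
      calc |r s0 a + γ * ∑ s', P s0 a s' * V s'|
          ≤ |r s0 a| + |γ * ∑ s', P s0 a s' * V s'| := abs_add_le _ _
        _ ≤ rmax + γ * |V s0| := by
            rw [abs_mul, abs_of_nonneg hγ0]
            exact add_le_add (hr s0 a) (mul_le_mul_of_nonneg_left h2 hγ0)
    calc |V s0| = |∑ a, pol s0 a * (r s0 a + γ * ∑ s', P s0 a s' * V s')| := by rw [hV s0]
      _ ≤ ∑ a, |pol s0 a * (r s0 a + γ * ∑ s', P s0 a s' * V s')| :=
          Finset.abs_sum_le_sum_abs _ _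
      _ = ∑ a, pol s0 a * |r s0 a + γ * ∑ s', P s0 a s' * V s'| := by
          refine Finset.sum_congr rfl fun a _ => ?_
          rw [abs_mul, abs_of_nonneg ((hpol s0).1 a)]
      _ ≤ ∑ a, pol s0 a * (rmax + γ * |V s0|) := by
          refine Finset.sum_le_sum fun a _ => ?_
          exact mul_le_mul_of_nonneg_left (h1 a) ((hpol s0).1 a)
      _ = rmax + γ * |V s0| := by rw [← Finset.sum_mul, (hpol s0).2, one_mul]
  intro s
  have hs := hs0 s (Finset.mem_univ s)
  rw [le_div_iff₀ h1γ]
  nlinarith [abs_nonneg (V s0)]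

lemma diff_bound {S A : Type} [Fintype S] [Fintype A] [Nonempty S]
    (P1 P2 : S → A → S → ℝ)
    (hP1 : ∀ s a, (∀ s', 0 ≤ P1 s a s') ∧ ∑ s', P1 s a s' = 1)
    (hP2 : ∀ s a, (∀ s', 0 ≤ P2 s a s') ∧ ∑ s', P2 s a s' = 1)
    (pol : S → A → ℝ) (hpol : IsPolicy pol)
    (r : S → A → ℝ) (rmax : ℝ) (hr : ∀ s a, |r s a| ≤ rmax)
    (γ : ℝ) (hγ0 : 0 ≤ γ) (hγ1 : γ < 1)
    (Δ : ℝ) (hΔ : ∀ s a, Dtv (P1 s a) (P2 s a) ≤ Δ) (hΔ0 : 0 ≤ Δ)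
    (V1 V2 : S → ℝ)
    (hV1 : ∀ s, V1 s = ∑ a, pol s a * (r s a + γ * ∑ s', P1 s a s' * V1 s'))
    (hV2 : ∀ s, V2 s = ∑ a, pol s a * (r s a + γ * ∑ s', P2 s a s' * V2 s')) :
    ∀ s, |V1 s - V2 s| ≤ 2 * γ * Δ * (rmax / (1 - γ)) / (1 - γ) := by
  have h1γ : (0:ℝ) < 1 - γ := by linarith
  have hK : ∀ s, |V1 s| ≤ rmax / (1 - γ) :=
    val_bound P1 hP1 pol hpol r rmax hr γ hγ0 hγ1 V1 hV1
  have hK0 : (0:ℝ) ≤ rmax / (1 - γ) := le_trans (abs_nonneg _) (hK (Classical.arbitrary S))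
  obtain ⟨s0, -, hs0⟩ := Finset.exists_max_image (Finset.univ : Finset S)
    (fun s => |V1 s - V2 s|) Finset.univ_nonempty
  set K := rmax / (1 - γ) with hKdef
  have key : |V1 s0 - V2 s0| ≤ γ * (2 * Δ * K + |V1 s0 - V2 s0|) := by
    have heq : V1 s0 - V2 s0 = ∑ a, pol s0 a *
        (γ * ((∑ s', (P1 s0 a s' - P2 s0 a s') * V1 s') +
              ∑ s', P2 s0 a s' * (V1 s' - V2 s'))) := by
      rw [hV1 s0, hV2 s0, ← Finset.sum_sub_distrib]
      refine Finset.sum_congr rfl fun a _ => ?_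
      have hc : ∑ s', (P1 s0 a s' - P2 s0 a s') * V1 s' +
          ∑ s', P2 s0 a s' * (V1 s' - V2 s') =
          (∑ s', P1 s0 a s' * V1 s') - ∑ s', P2 s0 a s' * V2 s' := by
        rw [← Finset.sum_add_distrib, ← Finset.sum_sub_distrib]
        exact Finset.sum_congr rfl fun s' _ => by ring
      rw [hc]; ring
    have hterm : ∀ a, |γ * ((∑ s', (P1 s0 a s' - P2 s0 a s') * V1 s') +
              ∑ s', P2 s0 a s' * (V1 s' - V2 s'))| ≤
        γ * (2 * Δ * K + |V1 s0 - V2 s0|) := by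
      intro a
      have hA : |∑ s', (P1 s0 a s' - P2 s0 a s') * V1 s'| ≤ 2 * Δ * K := by
        calc |∑ s', (P1 s0 a s' - P2 s0 a s') * V1 s'|
            ≤ ∑ s', |(P1 s0 a s' - P2 s0 a s') * V1 s'| := Finset.abs_sum_le_sum_abs _ _
          _ = ∑ s', |P1 s0 a s' - P2 s0 a s'| * |V1 s'| := by
              simp [abs_mul]
          _ ≤ ∑ s', |P1 s0 a s' - P2 s0 a s'| * K := by
              refine Finset.sum_le_sum fun s' _ => ?_
              exact mul_le_mul_of_nonneg_left (hK s') (abs_nonneg _)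
          _ = (2 * Dtv (P1 s0 a) (P2 s0 a)) * K := by
              rw [← Finset.sum_mul]; unfold Dtv; ring
          _ ≤ 2 * Δ * K := by
              have := hΔ s0 a
              nlinarith
      have hB : |∑ s', P2 s0 a s' * (V1 s' - V2 s')| ≤ |V1 s0 - V2 s0| := by
        calc |∑ s', P2 s0 a s' * (V1 s' - V2 s')|
            ≤ ∑ s', |P2 s0 a s' * (V1 s' - V2 s')| := Finset.abs_sum_le_sum_abs _ _
          _ = ∑ s', P2 s0 a s' * |V1 s' - V2 s'| := by
              refine Finset.sum_congr rfl fun s' _ => ?_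
              rw [abs_mul, abs_of_nonneg ((hP2 s0 a).1 s')]
          _ ≤ ∑ s', P2 s0 a s' * |V1 s0 - V2 s0| := by
              refine Finset.sum_le_sum fun s' _ => ?_
              exact mul_le_mul_of_nonneg_left (hs0 s' (Finset.mem_univ _)) ((hP2 s0 a).1 s')
          _ = |V1 s0 - V2 s0| := by rw [← Finset.sum_mul, (hP2 s0 a).2, one_mul]
      rw [abs_mul, abs_of_nonneg hγ0]
      refine mul_le_mul_of_nonneg_left ?_ hγ0
      calc |(∑ s', (P1 s0 a s' - P2 s0 a s') * V1 s') +
              ∑ s', P2 s0 a s' * (V1 s' - V2 s')| ≤ _ + _ := abs_add_le _ _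
        _ ≤ 2 * Δ * K + |V1 s0 - V2 s0| := add_le_add hA hB
    calc |V1 s0 - V2 s0| = |∑ a, pol s0 a *
        (γ * ((∑ s', (P1 s0 a s' - P2 s0 a s') * V1 s') +
              ∑ s', P2 s0 a s' * (V1 s' - V2 s')))| := by rw [heq]
      _ ≤ ∑ a, |pol s0 a *
        (γ * ((∑ s', (P1 s0 a s' - P2 s0 a s') * V1 s') +
              ∑ s', P2 s0 a s' * (V1 s' - V2 s')))| := Finset.abs_sum_le_sum_abs _ _
      _ = ∑ a, pol s0 a * |γ * ((∑ s', (P1 s0 a s' - P2 s0 a s') * V1 s') +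
              ∑ s', P2 s0 a s' * (V1 s' - V2 s'))| := by
          refine Finset.sum_congr rfl fun a _ => ?_
          rw [abs_mul, abs_of_nonneg ((hpol s0).1 a)]
      _ ≤ ∑ a, pol s0 a * (γ * (2 * Δ * K + |V1 s0 - V2 s0|)) := by
          refine Finset.sum_le_sum fun a _ => ?_
          exact mul_le_mul_of_nonneg_left (hterm a) ((hpol s0).1 a)
      _ = γ * (2 * Δ * K + |V1 s0 - V2 s0|) := by
          rw [← Finset.sum_mul, (hpol s0).2, one_mul]
  intro s
  have hs := hs0 s (Finset.mem_univ s)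
  rw [le_div_iff₀ h1γ]
  nlinarith [abs_nonneg (V1 s0 - V2 s0)]

/-- Sub-optimality gap on the target domain: the target sub-optimality of a policy π
is bounded by its value misalignment on the source, the dynamics misalignment, and
the inherent gap ε_opt between the source optimal and in-sample optimal policies. -/
theorem stmt_1
    {S A : Type} [Fintype S] [Fintype A] [Nonempty S] [Nonempty A]
    (Psrc Ptar : S → A → S → ℝ)
    (hPsrc : ∀ s a, (∀ s', 0 ≤ Psrc s a s') ∧ ∑ s', Psrc s a s' = 1)
    (hPtar : ∀ s a, (∀ s', 0 ≤ Ptar s a s') ∧ ∑ s', Ptar s a s' = 1)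
    (r : S → A → ℝ) (rmax : ℝ) (hr : ∀ s a, |r s a| ≤ rmax)
    (ρ : S → ℝ) (hρ0 : ∀ s, 0 ≤ ρ s) (hρ1 : ∑ s, ρ s = 1)
    (γ : ℝ) (hγ0 : 0 ≤ γ) (hγ1 : γ < 1)
    -- discounted returns in the source and target MDPs, characterized by
    -- Bellman-consistent value functions
    (Jsrc Jtar : (S → A → ℝ) → ℝ)
    (hJsrc : ∀ pol, IsPolicy pol → ∃ V : S → ℝ,
      (∀ s, V s = ∑ a, pol s a * (r s a + γ * ∑ s', Psrc s a s' * V s')) ∧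
      Jsrc pol = ∑ s, ρ s * V s)
    (hJtar : ∀ pol, IsPolicy pol → ∃ V : S → ℝ,
      (∀ s, V s = ∑ a, pol s a * (r s a + γ * ∑ s', Ptar s a s' * V s')) ∧
      Jtar pol = ∑ s, ρ s * V s)
    -- optimal policies of the two domains and the in-sample optimal policy
    (polTar polSrc polIn pol : S → A → ℝ)
    (hpolTar : IsPolicy polTar) (hpolSrc : IsPolicy polSrc)
    (hpolIn : IsPolicy polIn) (hpol : IsPolicy pol)
    (hoptTar : ∀ pol', IsPolicy pol' → Jtar pol' ≤ Jtar polTar)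
    (hoptSrc : ∀ pol', IsPolicy pol' → Jsrc pol' ≤ Jsrc polSrc)
    (εopt : ℝ) (hεopt : εopt = Jsrc polSrc - Jsrc polIn) :
    |Jtar pol - Jtar polTar| ≤ |Jsrc pol - Jsrc polIn| +
      ((2 * γ + 2) * rmax / (1 - γ) ^ 2) *
        (⨆ p : S × A, Dtv (Psrc p.1 p.2) (Ptar p.1 p.2)) + εopt := by
  classical
  have h1γ : (0:ℝ) < 1 - γ := by linarith
  have hrmax : 0 ≤ rmax :=
    le_trans (abs_nonneg _) (hr (Classical.arbitrary S) (Classical.arbitrary A))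
  set Δ := ⨆ p : S × A, Dtv (Psrc p.1 p.2) (Ptar p.1 p.2) with hΔdef
  have hbdd : BddAbove (Set.range fun p : S × A => Dtv (Psrc p.1 p.2) (Ptar p.1 p.2)) := by
    refine ⟨1, ?_⟩
    rintro x ⟨⟨s, a⟩, rfl⟩
    unfold Dtv
    have h1 : ∑ s', |Psrc s a s' - Ptar s a s'| ≤ 2 := by
      calc ∑ s', |Psrc s a s' - Ptar s a s'|
          ≤ ∑ s', (Psrc s a s' + Ptar s a s') := by
            refine Finset.sum_le_sum fun s' _ => ?_
            have := (hPsrc s a).1 s'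
            have := (hPtar s a).1 s'
            rw [abs_sub_le_iff]; constructor <;> linarith
        _ = 2 := by rw [Finset.sum_add_distrib, (hPsrc s a).2, (hPtar s a).2]; norm_num
    linarith
  have hΔub : ∀ s a, Dtv (Psrc s a) (Ptar s a) ≤ Δ := fun s a =>
    le_ciSup hbdd (⟨s, a⟩ : S × A)
  have hΔ0 : 0 ≤ Δ := by
    refine le_trans ?_ (hΔub (Classical.arbitrary S) (Classical.arbitrary A))
    unfold Dtv
    positivity
  set B := 2 * γ * Δ * (rmax / (1 - γ)) / (1 - γ) with hBdef
  have hsim : ∀ q, IsPolicy q → |Jsrc q - Jtar q| ≤ B := by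
    intro q hq
    obtain ⟨V1, hV1, hJ1⟩ := hJsrc q hq
    obtain ⟨V2, hV2, hJ2⟩ := hJtar q hq
    have hd := diff_bound Psrc Ptar hPsrc hPtar q hq r rmax hr γ hγ0 hγ1 Δ hΔub hΔ0
      V1 V2 hV1 hV2
    rw [hJ1, hJ2, ← Finset.sum_sub_distrib]
    calc |∑ s, (ρ s * V1 s - ρ s * V2 s)| ≤ ∑ s, |ρ s * V1 s - ρ s * V2 s| :=
          Finset.abs_sum_le_sum_abs _ _
      _ = ∑ s, ρ s * |V1 s - V2 s| := by
          refine Finset.sum_congr rfl fun s _ => ?_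
          rw [← mul_sub, abs_mul, abs_of_nonneg (hρ0 s)]
      _ ≤ ∑ s, ρ s * B := by
          refine Finset.sum_le_sum fun s _ => ?_
          exact mul_le_mul_of_nonneg_left (hd s) (hρ0 s)
      _ = B := by rw [← Finset.sum_mul, hρ1, one_mul]
  have h1 := abs_le.mp (hsim polTar hpolTar)
  have h2 := abs_le.mp (hsim pol hpol)
  have habs : |Jtar pol - Jtar polTar| = Jtar polTar - Jtar pol := by
    rw [abs_sub_comm, abs_of_nonneg (sub_nonneg.mpr (hoptTar pol hpol))]
  have h3 : Jsrc polIn - Jsrc pol ≤ |Jsrc pol - Jsrc polIn| := by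
    rw [abs_sub_comm]; exact le_abs_self _
  have h4 := hoptSrc polTar hpolTar
  have hB2 : 2 * B ≤ ((2 * γ + 2) * rmax / (1 - γ) ^ 2) * Δ := by
    have hB' : 2 * B = 4 * γ * Δ * rmax / (1 - γ) ^ 2 := by
      rw [hBdef]; field_simp; ring
    have hR : ((2 * γ + 2) * rmax / (1 - γ) ^ 2) * Δ =
        ((2 * γ + 2) * rmax * Δ) / (1 - γ) ^ 2 := by ring
    rw [hB', hR, div_le_div_iff₀ (by positivity) (by positivity)]
    have key : 0 ≤ (2 - 2 * γ) * (rmax * Δ) * (1 - γ) ^ 2 :=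
      mul_nonneg (mul_nonneg (by linarith) (mul_nonneg hrmax hΔ0)) (sq_nonneg _)
    nlinarith [key]
  rw [habs]
  linarith [h1.1, h1.2, h2.1, h2.2]
end

section
/- Let M_src and M_tar be MDPs with shared reward |r| ≤ r_max, differing only in dynamics. For the one-step Bellman optimality recursion, the difference of horizon-(h−1) optimal values satisfies: max_s [V*_{src,h−1}(s) − V*_{tar,h−1}(s)] ≤ (2 r_max / (1−γ)) · sup_{s,a} D_TV(P_src(·|s,a), P_tar(·|s,a)) + γ · max_{s'} [V*_{src,h}(s') − V*_{tar,h}(s')], where V*_{·,h} are finite-horizon optimal value functions with |V*| ≤ r_max/(1−γ). -/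
open Finset

theorem ciSup_sub_ciSup_le_ciSup_sub {ι : Type*} [Finite ι] [Nonempty ι] (f g : ι → ℝ) :
    (⨆ i, f i) - (⨆ i, g i) ≤ ⨆ i, (f i - g i) := by
  rw [sub_le_iff_le_add]
  refine ciSup_le fun i => ?_
  have hfg := le_ciSup (Finite.bddAbove_range fun i => f i - g i) i
  have hg := le_ciSup (Finite.bddAbove_range g) i
  linarith

theorem abs_add_mul_le_div_one_sub {x y R γ : ℝ} (hx : |x| ≤ R) (hy : |y| ≤ R / (1 - γ))
    (hγ0 : 0 ≤ γ) (hγ1 : γ < 1) : |x + γ * y| ≤ R / (1 - γ) :=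
  calc |x + γ * y| ≤ |x| + γ * |y| := by
        simpa only [abs_mul, abs_of_nonneg hγ0] using abs_add_le x (γ * y)
    _ ≤ R + γ * (R / (1 - γ)) := by gcongr
    _ = R / (1 - γ) := by field_simp [(sub_pos.2 hγ1).ne']; ring

section FiniteStateSpace

variable {S : Type} [Fintype S]

theorem sum_sub_mul_le_two_mul_Dtv {p q v : S → ℝ} {C : ℝ} (hv : ∀ s, |v s| ≤ C) :
    ∑ s, (p s - q s) * v s ≤ 2 * C * Dtv p q :=
  calc ∑ s, (p s - q s) * v s ≤ ∑ s, |p s - q s| * C := by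
        refine sum_le_sum fun s _ => ?_
        calc (p s - q s) * v s ≤ |(p s - q s) * v s| := le_abs_self _
          _ = |p s - q s| * |v s| := abs_mul _ _
          _ ≤ |p s - q s| * C := by gcongr; exact hv s
    _ = 2 * C * Dtv p q := by rw [← sum_mul, Dtv]; ring

theorem sum_mul_le_ciSup [Nonempty S] {q w : S → ℝ} (hq0 : ∀ s, 0 ≤ q s)
    (hq1 : ∑ s, q s = 1) : ∑ s, q s * w s ≤ ⨆ s, w s :=
  calc ∑ s, q s * w s ≤ ∑ s, q s * ⨆ t, w t :=
        sum_le_sum fun s _ =>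
          mul_le_mul_of_nonneg_left (le_ciSup (Finite.bddAbove_range w) s) (hq0 s)
    _ = ⨆ t, w t := by rw [← sum_mul, hq1, one_mul]

theorem backup_sub_backup_le [Nonempty S] {p q V W : S → ℝ} {x γ C : ℝ}
    (hq0 : ∀ s, 0 ≤ q s) (hq1 : ∑ s, q s = 1) (hγ0 : 0 ≤ γ) (hV : ∀ s, |x + γ * V s| ≤ C) :
    ∑ s, p s * (x + γ * V s) - ∑ s, q s * (x + γ * W s) ≤
      2 * C * Dtv p q + γ * ⨆ s, (V s - W s) := by
  have hsplit : ∑ s, p s * (x + γ * V s) - ∑ s, q s * (x + γ * W s) =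
      ∑ s, (p s - q s) * (x + γ * V s) + γ * ∑ s, q s * (V s - W s) := by
    rw [mul_sum, ← sum_add_distrib, ← sum_sub_distrib]
    exact sum_congr rfl fun s _ => by ring
  rw [hsplit]
  gcongr
  · exact sum_sub_mul_le_two_mul_Dtv hV
  · exact sum_mul_le_ciSup hq0 hq1

end FiniteStateSpace

theorem stmt_3_general
    {S A : Type} [Fintype S] [Fintype A] [Nonempty S] [Nonempty A]
    (Psrc Ptar : S → A → S → ℝ)
    (hPtar : ∀ s a, (∀ s', 0 ≤ Ptar s a s') ∧ ∑ s', Ptar s a s' = 1)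
    (r : S → A → ℝ) (rmax : ℝ) (hr : ∀ s a, |r s a| ≤ rmax)
    (γ : ℝ) (hγ0 : 0 ≤ γ) (hγ1 : γ < 1)
    (Vsrc0 Vsrc1 Vtar0 Vtar1 : S → ℝ)
    -- finite-horizon Bellman optimality recursions
    (hVsrc : ∀ s, Vsrc0 s = ⨆ a : A, ∑ s', Psrc s a s' * (r s a + γ * Vsrc1 s'))
    (hVtar : ∀ s, Vtar0 s = ⨆ a : A, ∑ s', Ptar s a s' * (r s a + γ * Vtar1 s'))
    -- boundedness of the finite-horizon optimal values
    (hBsrc : ∀ s, |Vsrc1 s| ≤ rmax / (1 - γ)) :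
    (⨆ s : S, (Vsrc0 s - Vtar0 s)) ≤
      (2 * rmax / (1 - γ)) * (⨆ p : S × A, Dtv (Psrc p.1 p.2) (Ptar p.1 p.2)) +
        γ * ⨆ s' : S, (Vsrc1 s' - Vtar1 s') := by
  have hrmax : 0 ≤ rmax :=
    (abs_nonneg _).trans (hr (Classical.arbitrary S) (Classical.arbitrary A))
  have hscale : 0 ≤ 2 * rmax / (1 - γ) := by
    have := sub_pos.2 hγ1
    positivity
  refine ciSup_le fun s => ?_
  rw [hVsrc, hVtar]
  refine (ciSup_sub_ciSup_le_ciSup_sub _ _).trans (ciSup_le fun a => ?_)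
  calc _ ≤ 2 * (rmax / (1 - γ)) * Dtv (Psrc s a) (Ptar s a) + γ * ⨆ s', (Vsrc1 s' - Vtar1 s') :=
        backup_sub_backup_le (hPtar s a).1 (hPtar s a).2 hγ0
          fun s' => abs_add_mul_le_div_one_sub (hr s a) (hBsrc s') hγ0 hγ1
    _ ≤ _ := by
        rw [← mul_div_assoc]
        gcongr
        exact le_ciSup (Finite.bddAbove_range fun p : S × A => Dtv (Psrc p.1 p.2) (Ptar p.1 p.2))
          (s, a)

/-- One-step recursion for finite-horizon optimal value differences under dynamics
shift: the horizon-(h-1) gap is bounded by a per-step TV term plus γ times the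
horizon-h gap. `Vsrc0, Vtar0` are the horizon-(h-1) values and `Vsrc1, Vtar1` the
horizon-h values. -/
theorem stmt_3
    {S A : Type} [Fintype S] [Fintype A] [Nonempty S] [Nonempty A]
    (Psrc Ptar : S → A → S → ℝ)
    (hPsrc : ∀ s a, (∀ s', 0 ≤ Psrc s a s') ∧ ∑ s', Psrc s a s' = 1)
    (hPtar : ∀ s a, (∀ s', 0 ≤ Ptar s a s') ∧ ∑ s', Ptar s a s' = 1)
    (r : S → A → ℝ) (rmax : ℝ) (hr : ∀ s a, |r s a| ≤ rmax)
    (γ : ℝ) (hγ0 : 0 ≤ γ) (hγ1 : γ < 1)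
    (Vsrc0 Vsrc1 Vtar0 Vtar1 : S → ℝ)
    -- finite-horizon Bellman optimality recursions
    (hVsrc : ∀ s, Vsrc0 s = ⨆ a : A, ∑ s', Psrc s a s' * (r s a + γ * Vsrc1 s'))
    (hVtar : ∀ s, Vtar0 s = ⨆ a : A, ∑ s', Ptar s a s' * (r s a + γ * Vtar1 s'))
    -- boundedness of the finite-horizon optimal values
    (hBsrc : ∀ s, |Vsrc1 s| ≤ rmax / (1 - γ))
    (hBtar : ∀ s, |Vtar1 s| ≤ rmax / (1 - γ)) :
    (⨆ s : S, (Vsrc0 s - Vtar0 s)) ≤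
      (2 * rmax / (1 - γ)) * (⨆ p : S × A, Dtv (Psrc p.1 p.2) (Ptar p.1 p.2)) +
        γ * ⨆ s' : S, (Vsrc1 s' - Vtar1 s') :=
  stmt_3_general Psrc Ptar hPtar r rmax hr γ hγ0 hγ1 Vsrc0 Vsrc1 Vtar0 Vtar1 hVsrc hVtar hBsrc
end

section
/- Consider a finite discounted MDP M with discount γ ∈ [0,1). For any two policies μ and π' with discounted occupancy measure d_μ of μ and advantage function A_{π'} of π', the performance difference lemma holds: J_M(μ) − J_M(π') = (1/(1−γ)) · E_{s ~ d_μ, a ~ μ(·|s)}[A_{π'}(s,a)]. -/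
private lemma sum_rot_aux {α β σ : Type} [Fintype α] [Fintype β] [Fintype σ]
    (f : α → β → σ → ℝ) :
    ∑ c, ∑ a, ∑ b, f a b c = ∑ a, ∑ b, ∑ c, f a b c := by
  rw [Finset.sum_comm]
  exact Finset.sum_congr rfl fun a _ => Finset.sum_comm


/-- Performance difference lemma: `J(μ) − J(π') = (1/(1−γ)) E_{s~d_μ, a~μ}[A_{π'}(s,a)]`. -/
theorem stmt_5
    {S A : Type} [Fintype S] [Fintype A] [Nonempty S] [Nonempty A]
    (P : S → A → S → ℝ)
    (hP : ∀ s a, (∀ s', 0 ≤ P s a s') ∧ ∑ s', P s a s' = 1)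
    (r : S → A → ℝ)
    (ρ : S → ℝ) (hρ0 : ∀ s, 0 ≤ ρ s) (hρ1 : ∑ s, ρ s = 1)
    (γ : ℝ) (hγ0 : 0 ≤ γ) (hγ1 : γ < 1)
    (mu pol' : S → A → ℝ)
    (hmu : ∀ s, (∀ a, 0 ≤ mu s a) ∧ ∑ a, mu s a = 1)
    (hpol' : ∀ s, (∀ a, 0 ≤ pol' s a) ∧ ∑ a, pol' s a = 1)
    -- normalized discounted occupancy measure of μ
    (d : S → ℝ)
    (hd : ∀ s, d s = (1 - γ) * ρ s + γ * ∑ sb, ∑ ab, d sb * mu sb ab * P sb ab s)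
    -- Q and V functions of π'
    (Q' : S → A → ℝ) (Vp : S → ℝ)
    (hQ' : ∀ s a, Q' s a = r s a + γ * ∑ s', P s a s' * Vp s')
    (hVp : ∀ s, Vp s = ∑ a, pol' s a * Q' s a)
    -- value function of μ
    (Vmu : S → ℝ)
    (hVmu : ∀ s, Vmu s = ∑ a, mu s a * (r s a + γ * ∑ s', P s a s' * Vmu s'))
    (Jmu Jp : ℝ)
    (hJmu : Jmu = ∑ s, ρ s * Vmu s)
    (hJp : Jp = ∑ s, ρ s * Vp s) :
    Jmu - Jp = (1 / (1 - γ)) * ∑ s, d s * ∑ a, mu s a * (Q' s a - Vp s) := by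
  set Δ : S → ℝ := fun s => Vmu s - Vp s with hΔ
  -- per-state identity
  have key1 : ∀ s, ∑ a, mu s a * (Q' s a - Vp s)
      = Δ s - γ * ∑ a, mu s a * ∑ s', P s a s' * Δ s' := by
    intro s
    have hm := (hmu s).2
    have hsub : ∀ a, ∑ s', P s a s' * Δ s'
        = (∑ s', P s a s' * Vmu s') - ∑ s', P s a s' * Vp s' := by
      intro a
      simp [hΔ, mul_sub, Finset.sum_sub_distrib]
    calc ∑ a, mu s a * (Q' s a - Vp s)
        = ∑ a, (mu s a * (r s a + γ * ∑ s', P s a s' * Vmu s')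
            - γ * (mu s a * ∑ s', P s a s' * Δ s') - mu s a * Vp s) := by
          apply Finset.sum_congr rfl
          intro a _
          rw [hQ', hsub a]; ring
      _ = (∑ a, mu s a * (r s a + γ * ∑ s', P s a s' * Vmu s'))
            - γ * (∑ a, mu s a * ∑ s', P s a s' * Δ s')
            - (∑ a, mu s a) * Vp s := by
          simp [Finset.sum_sub_distrib, Finset.mul_sum, Finset.sum_mul]
      _ = Δ s - γ * ∑ a, mu s a * ∑ s', P s a s' * Δ s' := by
          rw [hm, ← hVmu s]; simp [hΔ]; ring
  -- flow identity
  have flow : ∀ s', γ * ∑ sb, ∑ ab, d sb * mu sb ab * P sb ab s'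
      = d s' - (1 - γ) * ρ s' := by
    intro s'
    have := hd s'
    linarith
  have key2 : ∑ s, d s * (γ * ∑ a, mu s a * ∑ s', P s a s' * Δ s')
      = ∑ s', (d s' - (1 - γ) * ρ s') * Δ s' := by
    have step1 : ∑ s, d s * (γ * ∑ a, mu s a * ∑ s', P s a s' * Δ s')
        = ∑ sb, ∑ ab, ∑ s', γ * (d sb * mu sb ab * P sb ab s') * Δ s' := by
      simp only [Finset.mul_sum]
      apply Finset.sum_congr rfl; intro sb _
      apply Finset.sum_congr rfl; intro ab _
      apply Finset.sum_congr rfl; intro s' _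
      ring
    have step2 : ∀ s', (γ * ∑ sb, ∑ ab, d sb * mu sb ab * P sb ab s') * Δ s'
        = ∑ sb, ∑ ab, γ * (d sb * mu sb ab * P sb ab s') * Δ s' := by
      intro s'
      simp only [Finset.mul_sum, Finset.sum_mul]
    rw [step1, ← sum_rot_aux]
    apply Finset.sum_congr rfl; intro s' _
    rw [← step2, flow s']
  -- main computation
  have main : ∑ s, d s * ∑ a, mu s a * (Q' s a - Vp s) = (1 - γ) * (Jmu - Jp) := by
    calc ∑ s, d s * ∑ a, mu s a * (Q' s a - Vp s)
        = ∑ s, (d s * Δ s - d s * (γ * ∑ a, mu s a * ∑ s', P s a s' * Δ s')) := by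
          apply Finset.sum_congr rfl; intro s _
          rw [key1 s]; ring
      _ = ∑ s, d s * Δ s - ∑ s, d s * (γ * ∑ a, mu s a * ∑ s', P s a s' * Δ s') := by
          rw [Finset.sum_sub_distrib]
      _ = ∑ s, d s * Δ s - ∑ s', (d s' - (1 - γ) * ρ s') * Δ s' := by rw [key2]
      _ = (1 - γ) * ∑ s, ρ s * Δ s := by
          rw [← Finset.sum_sub_distrib, Finset.mul_sum]
          apply Finset.sum_congr rfl; intro s _; ring
      _ = (1 - γ) * (Jmu - Jp) := by
          rw [hJmu, hJp, ← Finset.sum_sub_distrib]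
          congr 1
          apply Finset.sum_congr rfl; intro s _
          simp [hΔ]; ring
  rw [main]
  have h1 : (1 : ℝ) - γ ≠ 0 := by linarith
  field_simp
end

section
/- Consider a finite discounted MDP M with γ ∈ [0,1) and policies π, μ. Assume (i) E_{a~π(·|s)}[A_μ(s,a)] ≥ 0 for all s, and (ii) max_s KL(π(·|s) || μ(·|s)) ≤ ε. Let ε_μ^π := max_s |E_{a~π(·|s)}[A_μ(s,a)]|. Then J_M(π) − J_M(μ) ≥ − (2γ ε_μ^π / (1−γ)²) · √(ε/2). -/
noncomputable def KLdiv {A : Type} [Fintype A] (p q : A → ℝ) : ℝ :=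
  ∑ a, p a * Real.log (p a / q a)

/-- Safe policy improvement: under a nonnegative expected advantage condition and a
KL closeness condition, `J(π) − J(μ) ≥ −(2γ ε_μ^π/(1−γ)²)·√(ε/2)`. -/
theorem stmt_8
    {S A : Type} [Fintype S] [Fintype A] [Nonempty S] [Nonempty A]
    (P : S → A → S → ℝ)
    (hP : ∀ s a, (∀ s', 0 ≤ P s a s') ∧ ∑ s', P s a s' = 1)
    (r : S → A → ℝ)
    (ρ : S → ℝ) (hρ0 : ∀ s, 0 ≤ ρ s) (hρ1 : ∑ s, ρ s = 1)
    (γ : ℝ) (hγ0 : 0 ≤ γ) (hγ1 : γ < 1)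
    (pol mu : S → A → ℝ)
    (hpol : ∀ s, (∀ a, 0 ≤ pol s a) ∧ ∑ a, pol s a = 1)
    (hmu : ∀ s, (∀ a, 0 ≤ mu s a) ∧ ∑ a, mu s a = 1)
    -- value function and advantage of μ
    (Vmu : S → ℝ)
    (hVmu : ∀ s, Vmu s = ∑ a, mu s a * (r s a + γ * ∑ s', P s a s' * Vmu s'))
    (Amu : S → A → ℝ)
    (hAmu : ∀ s a, Amu s a = r s a + γ * (∑ s', P s a s' * Vmu s') - Vmu s)
    -- value function of π and returns
    (Vpol : S → ℝ)
    (hVpol : ∀ s, Vpol s = ∑ a, pol s a * (r s a + γ * ∑ s', P s a s' * Vpol s'))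
    (Jpol Jmu : ℝ)
    (hJpol : Jpol = ∑ s, ρ s * Vpol s)
    (hJmu : Jmu = ∑ s, ρ s * Vmu s)
    -- (i) nonnegative expected advantage, (ii) KL closeness
    (hadv : ∀ s, 0 ≤ ∑ a, pol s a * Amu s a)
    (ε : ℝ) (hKL : ∀ s, KLdiv (pol s) (mu s) ≤ ε)
    (epsA : ℝ) (hepsA : epsA = ⨆ s : S, |∑ a, pol s a * Amu s a|) :
    Jpol - Jmu ≥ -(2 * γ * epsA / (1 - γ) ^ 2) * Real.sqrt (ε / 2) := by
  -- Step 1: Vpol ≥ Vmu pointwise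
  have key : ∀ s, 0 ≤ Vpol s - Vmu s := by
    obtain ⟨s0, -, hs0⟩ := Finset.exists_min_image Finset.univ (fun s => Vpol s - Vmu s)
      ⟨Classical.arbitrary S, Finset.mem_univ _⟩
    have hmin : ∀ s, Vpol s0 - Vmu s0 ≤ Vpol s - Vmu s := fun s => hs0 s (Finset.mem_univ s)
    have expand : Vpol s0 - Vmu s0 = (∑ a, pol s0 a * Amu s0 a)
        + γ * ∑ a, pol s0 a * ∑ s', P s0 a s' * (Vpol s' - Vmu s') := by
      have hA : ∑ a, pol s0 a * Amu s0 a
          = (∑ a, pol s0 a * (r s0 a + γ * ∑ s', P s0 a s' * Vmu s')) - Vmu s0 := by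
        simp only [hAmu, mul_sub, Finset.sum_sub_distrib, ← Finset.sum_mul, (hpol s0).2, one_mul]
      have hsplit : ∀ a, ∑ s', P s0 a s' * (Vpol s' - Vmu s')
          = (∑ s', P s0 a s' * Vpol s') - ∑ s', P s0 a s' * Vmu s' := fun a => by
        simp [mul_sub, Finset.sum_sub_distrib]
      rw [hA, hVpol s0]
      have hterm : ∀ a ∈ Finset.univ, pol s0 a * (r s0 a + γ * ∑ s', P s0 a s' * Vpol s')
          = pol s0 a * (r s0 a + γ * ∑ s', P s0 a s' * Vmu s')
            + γ * (pol s0 a * ∑ s', P s0 a s' * (Vpol s' - Vmu s')) := by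
        intro a _; rw [hsplit a]; ring
      rw [Finset.sum_congr rfl hterm, Finset.sum_add_distrib, ← Finset.mul_sum]
      ring
    have inner : ∀ a, Vpol s0 - Vmu s0 ≤ ∑ s', P s0 a s' * (Vpol s' - Vmu s') := by
      intro a
      calc Vpol s0 - Vmu s0 = ∑ s', P s0 a s' * (Vpol s0 - Vmu s0) := by
            rw [← Finset.sum_mul, (hP s0 a).2, one_mul]
        _ ≤ _ := Finset.sum_le_sum fun s' _ =>
            mul_le_mul_of_nonneg_left (hmin s') ((hP s0 a).1 s')
    have outer : Vpol s0 - Vmu s0 ≤ ∑ a, pol s0 a * ∑ s', P s0 a s' * (Vpol s' - Vmu s') := by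
      calc Vpol s0 - Vmu s0 = ∑ a, pol s0 a * (Vpol s0 - Vmu s0) := by
            rw [← Finset.sum_mul, (hpol s0).2, one_mul]
        _ ≤ _ := Finset.sum_le_sum fun a _ =>
            mul_le_mul_of_nonneg_left (inner a) ((hpol s0).1 a)
    have h0 : 0 ≤ Vpol s0 - Vmu s0 := by
      nlinarith [mul_le_mul_of_nonneg_left outer hγ0, expand, hadv s0, hγ1]
    exact fun s => le_trans h0 (hmin s)
  -- Step 2: Jpol - Jmu ≥ 0
  have hJ : 0 ≤ Jpol - Jmu := by
    rw [hJpol, hJmu, ← Finset.sum_sub_distrib]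
    apply Finset.sum_nonneg
    intro s _
    rw [← mul_sub]
    exact mul_nonneg (hρ0 s) (key s)
  -- Step 3: RHS ≤ 0
  have hepsA0 : 0 ≤ epsA := by
    rw [hepsA]
    have : |∑ a, pol (Classical.arbitrary S) a * Amu (Classical.arbitrary S) a|
        ≤ ⨆ s : S, |∑ a, pol s a * Amu s a| :=
      le_ciSup (f := fun s : S => |∑ a, pol s a * Amu s a|)
        (Set.Finite.bddAbove (Set.finite_range _)) (Classical.arbitrary S)
    exact le_trans (abs_nonneg _) this
  have hrhs : -(2 * γ * epsA / (1 - γ) ^ 2) * Real.sqrt (ε / 2) ≤ 0 := by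
    apply mul_nonpos_of_nonpos_of_nonneg
    · apply neg_nonpos_of_nonneg
      positivity
    · exact Real.sqrt_nonneg _
  linarith
end

section
/- Telescoping lemma for dynamics shift: Let M_src and M_tar be finite discounted MDPs differing only in dynamics. For any policy π, J_{M_tar}(π) − J_{M_src}(π) = (γ/(1−γ)) · E_{(s,a) ~ ρ^π_{M_tar}}[ E_{s'~P_tar(·|s,a)}[V^π_{M_src}(s')] − E_{s'~P_src(·|s,a)}[V^π_{M_src}(s')] ], where ρ^π_{M_tar} is the normalized discounted state-action occupancy measure of π in M_tar. -/
/-- Telescoping (simulation) lemma for dynamics shift: the return gap of a fixed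
policy between target and source MDPs equals `γ/(1−γ)` times the expected
next-state source-value difference under the target state-action occupancy. -/
theorem stmt_13
    {S A : Type} [Fintype S] [Fintype A] [Nonempty S] [Nonempty A]
    (Psrc Ptar : S → A → S → ℝ)
    (hPsrc : ∀ s a, (∀ s', 0 ≤ Psrc s a s') ∧ ∑ s', Psrc s a s' = 1)
    (hPtar : ∀ s a, (∀ s', 0 ≤ Ptar s a s') ∧ ∑ s', Ptar s a s' = 1)
    (r : S → A → ℝ)
    (ρ : S → ℝ) (hρ0 : ∀ s, 0 ≤ ρ s) (hρ1 : ∑ s, ρ s = 1)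
    (γ : ℝ) (hγ0 : 0 ≤ γ) (hγ1 : γ < 1)
    (pol : S → A → ℝ)
    (hpol : ∀ s, (∀ a, 0 ≤ pol s a) ∧ ∑ a, pol s a = 1)
    -- value functions of π under source and target dynamics, and returns
    (Vsrc Vtar : S → ℝ)
    (hVsrc : ∀ s, Vsrc s = ∑ a, pol s a * (r s a + γ * ∑ s', Psrc s a s' * Vsrc s'))
    (hVtar : ∀ s, Vtar s = ∑ a, pol s a * (r s a + γ * ∑ s', Ptar s a s' * Vtar s'))
    (Jsrc Jtar : ℝ)
    (hJsrc : Jsrc = ∑ s, ρ s * Vsrc s)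
    (hJtar : Jtar = ∑ s, ρ s * Vtar s)
    -- normalized discounted state-action occupancy of π in the target MDP
    (occ : S → A → ℝ)
    (hocc : ∀ s a, occ s a = (1 - γ) * ρ s * pol s a +
      γ * (∑ sb, ∑ ab, occ sb ab * Ptar sb ab s) * pol s a) :
    Jtar - Jsrc = (γ / (1 - γ)) * ∑ s, ∑ a, occ s a *
      ((∑ s', Ptar s a s' * Vsrc s') - (∑ s', Psrc s a s' * Vsrc s')) := by
  set B : S → A → ℝ := fun s a =>
    (∑ s', Ptar s a s' * Vsrc s') - (∑ s', Psrc s a s' * Vsrc s') with hB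
  set D : S → A → ℝ := fun s a => ∑ s', Ptar s a s' * (Vtar s' - Vsrc s') with hD
  have key : ∀ s, Vtar s - Vsrc s = γ * ∑ a, pol s a * (B s a + D s a) := by
    intro s
    conv_lhs => rw [hVtar s, hVsrc s]
    rw [← Finset.sum_sub_distrib, Finset.mul_sum]
    refine Finset.sum_congr rfl fun a _ => ?_
    have hDs : D s a = ∑ s', Ptar s a s' * Vtar s' - ∑ s', Ptar s a s' * Vsrc s' := by
      simp [hD, mul_sub, Finset.sum_sub_distrib]
    simp only [hB, hDs]
    ring
  set μ : S → ℝ := fun s => (1 - γ) * ρ s + γ * ∑ sb, ∑ ab, occ sb ab * Ptar sb ab s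
    with hμ
  have occ2 : ∀ s a, occ s a = μ s * pol s a := by
    intro s a; rw [hocc s a]; simp only [hμ]; ring
  have lhs_eq : ∑ s, μ s * (Vtar s - Vsrc s)
      = (1 - γ) * ∑ s, ρ s * (Vtar s - Vsrc s) + γ * ∑ s, ∑ a, occ s a * D s a := by
    have swap : ∑ s, (∑ sb, ∑ ab, occ sb ab * Ptar sb ab s) * (Vtar s - Vsrc s)
        = ∑ sb, ∑ ab, occ sb ab * D sb ab := by
      simp only [hD, Finset.sum_mul, Finset.mul_sum]
      rw [Finset.sum_comm]
      refine Finset.sum_congr rfl fun sb _ => ?_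
      rw [Finset.sum_comm]
      exact Finset.sum_congr rfl fun ab _ => Finset.sum_congr rfl fun s _ => by ring
    simp only [hμ, add_mul, Finset.sum_add_distrib, mul_assoc, ← Finset.mul_sum, swap]
  have rhs_eq : ∑ s, μ s * (Vtar s - Vsrc s)
      = γ * ∑ s, ∑ a, occ s a * B s a + γ * ∑ s, ∑ a, occ s a * D s a := by
    have h1 : ∀ s, μ s * (Vtar s - Vsrc s)
        = γ * ∑ a, occ s a * B s a + γ * ∑ a, occ s a * D s a := by
      intro s
      rw [key s]
      simp only [occ2, Finset.mul_sum]
      rw [← Finset.sum_add_distrib]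
      exact Finset.sum_congr rfl fun a _ => by ring
    simp only [h1, Finset.sum_add_distrib, ← Finset.mul_sum]
  have main : (1 - γ) * ∑ s, ρ s * (Vtar s - Vsrc s) = γ * ∑ s, ∑ a, occ s a * B s a := by
    linarith [lhs_eq.symm.trans rhs_eq]
  have hne : (1 : ℝ) - γ ≠ 0 := by linarith
  have : Jtar - Jsrc = ∑ s, ρ s * (Vtar s - Vsrc s) := by
    rw [hJtar, hJsrc, ← Finset.sum_sub_distrib]
    exact Finset.sum_congr rfl fun s _ => by ring
  rw [this]
  field_simp
  linarith [main]
end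

section
/- Lipschitz refinement of the performance difference bound: Let M_src and M_tar differ only in dynamics, and suppose the value function V^π_{M_src} is K_V-Lipschitz in the state, i.e., |V^π_{M_src}(s_1) − V^π_{M_src}(s_2)| ≤ K_V ||s_1 − s_2|| for all s_1, s_2 ∈ S ⊆ ℝ^n. Then |J_{M_src}(π) − J_{M_tar}(π)| ≤ (γ/(1−γ)) · K_V · sup_{s,a} W_1(P_src(·|s,a), P_tar(·|s,a)), where W_1 is the 1-Wasserstein distance. -/
/-- 1-Wasserstein distance between two finitely-supported distributions with respect
to a cost function `c`, defined via couplings. -/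
noncomputable def W1 {S : Type} [Fintype S] (c : S → S → ℝ) (p q : S → ℝ) : ℝ :=
  sInf { w : ℝ | ∃ μ : S → S → ℝ, (∀ x y, 0 ≤ μ x y) ∧
    (∀ x, ∑ y, μ x y = p x) ∧ (∀ y, ∑ x, μ x y = q y) ∧
    w = ∑ x, ∑ y, μ x y * c x y }

/-- Kantorovich–Rubinstein style bound: for a `K`-Lipschitz function `f` (w.r.t. the
cost `c`), the difference of expectations is bounded by `K * W1 c p q`. -/
theorem W1_dual_bound {S : Type} [Fintype S] (c : S → S → ℝ) (p q : S → ℝ)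
    (hp0 : ∀ x, 0 ≤ p x) (hp1 : ∑ x, p x = 1)
    (hq0 : ∀ x, 0 ≤ q x) (hq1 : ∑ x, q x = 1)
    (f : S → ℝ) (K : ℝ) (hK : 0 ≤ K)
    (hf : ∀ x y, |f y - f x| ≤ K * c x y) :
    |∑ y, q y * f y - ∑ x, p x * f x| ≤ K * W1 c p q := by
  classical
  set Sset := { w : ℝ | ∃ μ : S → S → ℝ, (∀ x y, 0 ≤ μ x y) ∧
    (∀ x, ∑ y, μ x y = p x) ∧ (∀ y, ∑ x, μ x y = q y) ∧
    w = ∑ x, ∑ y, μ x y * c x y } with hSset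
  have hne : Sset.Nonempty := by
    refine ⟨∑ x, ∑ y, (p x * q y) * c x y, fun x y => p x * q y, ?_, ?_, ?_, rfl⟩
    · intro x y; exact mul_nonneg (hp0 x) (hq0 y)
    · intro x; rw [← Finset.mul_sum, hq1, mul_one]
    · intro y; rw [← Finset.sum_mul, hp1, one_mul]
  have hbound : ∀ w ∈ Sset, |∑ y, q y * f y - ∑ x, p x * f x| ≤ K * w := by
    intro w hw
    obtain ⟨μ, hμ0, hrow, hcol, hwval⟩ := hw
    have h1 : ∑ y, q y * f y = ∑ x, ∑ y, μ x y * f y := by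
      rw [Finset.sum_comm]
      refine Finset.sum_congr rfl fun y _ => ?_
      rw [← hcol y, Finset.sum_mul]
    have h2 : ∑ x, p x * f x = ∑ x, ∑ y, μ x y * f x := by
      refine Finset.sum_congr rfl fun x _ => ?_
      rw [← hrow x, Finset.sum_mul]
    rw [h1, h2, ← Finset.sum_sub_distrib]
    have hterm : ∀ x y, |μ x y * f y - μ x y * f x| ≤ K * (μ x y * c x y) := by
      intro x y
      rw [← mul_sub, abs_mul, abs_of_nonneg (hμ0 x y)]
      calc μ x y * |f y - f x| ≤ μ x y * (K * c x y) := by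
            exact mul_le_mul_of_nonneg_left (hf x y) (hμ0 x y)
        _ = K * (μ x y * c x y) := by ring
    calc |∑ x, (∑ y, μ x y * f y - ∑ y, μ x y * f x)|
        ≤ ∑ x, |∑ y, μ x y * f y - ∑ y, μ x y * f x| := Finset.abs_sum_le_sum_abs _ _
      _ = ∑ x, |∑ y, (μ x y * f y - μ x y * f x)| := by
          refine Finset.sum_congr rfl fun x _ => ?_
          rw [Finset.sum_sub_distrib]
      _ ≤ ∑ x, ∑ y, |μ x y * f y - μ x y * f x| := by
          exact Finset.sum_le_sum fun x _ => Finset.abs_sum_le_sum_abs _ _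
      _ ≤ ∑ x, ∑ y, K * (μ x y * c x y) := by
          exact Finset.sum_le_sum fun x _ => Finset.sum_le_sum fun y _ => hterm x y
      _ = K * ∑ x, ∑ y, μ x y * c x y := by
          rw [Finset.mul_sum]
          exact Finset.sum_congr rfl fun x _ => (Finset.mul_sum _ _ _).symm
      _ = K * w := by rw [hwval]
  have hW1 : W1 c p q = sInf Sset := rfl
  rcases eq_or_lt_of_le hK with hK0 | hKpos
  · obtain ⟨w₀, hw₀⟩ := hne
    have := hbound w₀ hw₀
    rw [← hK0] at this ⊢
    simpa using this
  · rw [hW1]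
    have hdiv : |∑ y, q y * f y - ∑ x, p x * f x| / K ≤ sInf Sset := by
      refine le_csInf hne fun w hw => ?_
      rw [div_le_iff₀ hKpos]
      calc |∑ y, q y * f y - ∑ x, p x * f x| ≤ K * w := hbound w hw
        _ = w * K := by ring
    rw [div_le_iff₀ hKpos] at hdiv
    calc |∑ y, q y * f y - ∑ x, p x * f x| ≤ sInf Sset * K := hdiv
      _ = K * sInf Sset := by ring

/-- Lipschitz refinement of the performance difference bound: if the source value
function is K_V-Lipschitz in the state, the return gap is bounded by
`γ/(1−γ) · K_V · sup_{s,a} W₁(P_src(·|s,a), P_tar(·|s,a))`. -/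
theorem stmt_15
    {S A E : Type} [Fintype S] [Fintype A] [Nonempty S] [Nonempty A]
    [NormedAddCommGroup E]
    (ι : S → E)  -- the (finite) state space sits inside a normed space
    (Psrc Ptar : S → A → S → ℝ)
    (hPsrc : ∀ s a, (∀ s', 0 ≤ Psrc s a s') ∧ ∑ s', Psrc s a s' = 1)
    (hPtar : ∀ s a, (∀ s', 0 ≤ Ptar s a s') ∧ ∑ s', Ptar s a s' = 1)
    (r : S → A → ℝ)
    (ρ : S → ℝ) (hρ0 : ∀ s, 0 ≤ ρ s) (hρ1 : ∑ s, ρ s = 1)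
    (γ : ℝ) (hγ0 : 0 ≤ γ) (hγ1 : γ < 1)
    (pol : S → A → ℝ)
    (hpol : ∀ s, (∀ a, 0 ≤ pol s a) ∧ ∑ a, pol s a = 1)
    (Vsrc Vtar : S → ℝ)
    (hVsrc : ∀ s, Vsrc s = ∑ a, pol s a * (r s a + γ * ∑ s', Psrc s a s' * Vsrc s'))
    (hVtar : ∀ s, Vtar s = ∑ a, pol s a * (r s a + γ * ∑ s', Ptar s a s' * Vtar s'))
    (Jsrc Jtar : ℝ)
    (hJsrc : Jsrc = ∑ s, ρ s * Vsrc s)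
    (hJtar : Jtar = ∑ s, ρ s * Vtar s)
    -- Lipschitz continuity of the source value function
    (K : ℝ) (hK : 0 ≤ K)
    (hLip : ∀ s₁ s₂, |Vsrc s₁ - Vsrc s₂| ≤ K * ‖ι s₁ - ι s₂‖) :
    |Jsrc - Jtar| ≤ (γ / (1 - γ)) * K *
      ⨆ p : S × A, W1 (fun x y => ‖ι x - ι y‖) (Psrc p.1 p.2) (Ptar p.1 p.2) := by
  classical
  set c : S → S → ℝ := fun x y => ‖ι x - ι y‖ with hc
  set W : ℝ := ⨆ p : S × A, W1 c (Psrc p.1 p.2) (Ptar p.1 p.2) with hWdef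
  -- duality bound for each state-action pair
  have key : ∀ s a, |∑ s', Ptar s a s' * Vsrc s' - ∑ s', Psrc s a s' * Vsrc s'|
      ≤ K * W := by
    intro s a
    have h1 : |∑ s', Ptar s a s' * Vsrc s' - ∑ s', Psrc s a s' * Vsrc s'|
        ≤ K * W1 c (Psrc s a) (Ptar s a) := by
      refine W1_dual_bound c (Psrc s a) (Ptar s a) (hPsrc s a).1 (hPsrc s a).2
        (hPtar s a).1 (hPtar s a).2 Vsrc K hK ?_
      intro x y
      calc |Vsrc y - Vsrc x| ≤ K * ‖ι y - ι x‖ := hLip y x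
        _ = K * c x y := by rw [hc]; simp [norm_sub_rev]
    have h2 : W1 c (Psrc s a) (Ptar s a) ≤ W := by
      exact le_ciSup (Set.Finite.bddAbove (Set.finite_range
        (fun p : S × A => W1 c (Psrc p.1 p.2) (Ptar p.1 p.2)))) (s, a)
    calc |∑ s', Ptar s a s' * Vsrc s' - ∑ s', Psrc s a s' * Vsrc s'|
        ≤ K * W1 c (Psrc s a) (Ptar s a) := h1
      _ ≤ K * W := mul_le_mul_of_nonneg_left h2 hK
  -- difference of value functions
  set D : S → ℝ := fun s => Vtar s - Vsrc s with hDdef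
  obtain ⟨s0, _, hs0⟩ := Finset.exists_max_image (Finset.univ : Finset S)
    (fun s => |D s|) ⟨Classical.arbitrary S, Finset.mem_univ _⟩
  set M : ℝ := |D s0| with hMdef
  have hDM : ∀ s, |D s| ≤ M := fun s => hs0 s (Finset.mem_univ s)
  have hM0 : 0 ≤ M := abs_nonneg _
  -- Bellman equation for the difference
  have hDs : ∀ s, D s = ∑ a, pol s a *
      (γ * (∑ s', Ptar s a s' * Vtar s' - ∑ s', Psrc s a s' * Vsrc s')) := by
    intro s
    rw [hDdef]
    simp only
    rw [hVtar s, hVsrc s, ← Finset.sum_sub_distrib]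
    exact Finset.sum_congr rfl fun a _ => by ring
  -- pointwise bound
  have hstep : ∀ s, |D s| ≤ γ * (M + K * W) := by
    intro s
    have hinner : ∀ a, |∑ s', Ptar s a s' * Vtar s' - ∑ s', Psrc s a s' * Vsrc s'|
        ≤ M + K * W := by
      intro a
      have hsplit : ∑ s', Ptar s a s' * Vtar s' - ∑ s', Psrc s a s' * Vsrc s'
          = (∑ s', Ptar s a s' * D s')
            + (∑ s', Ptar s a s' * Vsrc s' - ∑ s', Psrc s a s' * Vsrc s') := by
        have : ∑ s', Ptar s a s' * Vtar s'
            = ∑ s', Ptar s a s' * D s' + ∑ s', Ptar s a s' * Vsrc s' := by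
          rw [← Finset.sum_add_distrib]
          refine Finset.sum_congr rfl fun s' _ => ?_
          rw [hDdef]; ring
        rw [this]; ring
      have hPD : |∑ s', Ptar s a s' * D s'| ≤ M := by
        calc |∑ s', Ptar s a s' * D s'| ≤ ∑ s', |Ptar s a s' * D s'| :=
              Finset.abs_sum_le_sum_abs _ _
          _ = ∑ s', Ptar s a s' * |D s'| := by
              refine Finset.sum_congr rfl fun s' _ => ?_
              rw [abs_mul, abs_of_nonneg ((hPtar s a).1 s')]
          _ ≤ ∑ s', Ptar s a s' * M := Finset.sum_le_sum fun s' _ =>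
              mul_le_mul_of_nonneg_left (hDM s') ((hPtar s a).1 s')
          _ = M := by rw [← Finset.sum_mul, (hPtar s a).2, one_mul]
      calc |∑ s', Ptar s a s' * Vtar s' - ∑ s', Psrc s a s' * Vsrc s'|
          = |(∑ s', Ptar s a s' * D s')
              + (∑ s', Ptar s a s' * Vsrc s' - ∑ s', Psrc s a s' * Vsrc s')| := by
            rw [hsplit]
        _ ≤ |∑ s', Ptar s a s' * D s'|
              + |∑ s', Ptar s a s' * Vsrc s' - ∑ s', Psrc s a s' * Vsrc s'| :=
            abs_add_le _ _
        _ ≤ M + K * W := add_le_add hPD (key s a)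
    calc |D s| = |∑ a, pol s a *
          (γ * (∑ s', Ptar s a s' * Vtar s' - ∑ s', Psrc s a s' * Vsrc s'))| := by
          rw [← hDs s]
      _ ≤ ∑ a, |pol s a *
          (γ * (∑ s', Ptar s a s' * Vtar s' - ∑ s', Psrc s a s' * Vsrc s'))| :=
          Finset.abs_sum_le_sum_abs _ _
      _ = ∑ a, pol s a * (γ *
          |∑ s', Ptar s a s' * Vtar s' - ∑ s', Psrc s a s' * Vsrc s'|) := by
          refine Finset.sum_congr rfl fun a _ => ?_
          rw [abs_mul, abs_mul, abs_of_nonneg ((hpol s).1 a), abs_of_nonneg hγ0]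
      _ ≤ ∑ a, pol s a * (γ * (M + K * W)) := Finset.sum_le_sum fun a _ =>
          mul_le_mul_of_nonneg_left
            (mul_le_mul_of_nonneg_left (hinner a) hγ0) ((hpol s).1 a)
      _ = γ * (M + K * W) := by rw [← Finset.sum_mul, (hpol s).2, one_mul]
  -- bound on M
  have hMbound : M ≤ γ * M + γ * (K * W) := by
    have := hstep s0
    rw [← hMdef] at this
    linarith [this]
  have h1γ : (0:ℝ) < 1 - γ := by linarith
  -- |Jsrc - Jtar| ≤ M
  have hJ : |Jsrc - Jtar| ≤ M := by
    rw [hJsrc, hJtar, ← Finset.sum_sub_distrib]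
    calc |∑ s, (ρ s * Vsrc s - ρ s * Vtar s)|
        ≤ ∑ s, |ρ s * Vsrc s - ρ s * Vtar s| := Finset.abs_sum_le_sum_abs _ _
      _ = ∑ s, ρ s * |D s| := by
          refine Finset.sum_congr rfl fun s _ => ?_
          rw [← mul_sub, abs_mul, abs_of_nonneg (hρ0 s), hDdef]
          simp [abs_sub_comm]
      _ ≤ ∑ s, ρ s * M := Finset.sum_le_sum fun s _ =>
          mul_le_mul_of_nonneg_left (hDM s) (hρ0 s)
      _ = M := by rw [← Finset.sum_mul, hρ1, one_mul]
  calc |Jsrc - Jtar| ≤ M := hJ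
    _ ≤ (γ / (1 - γ)) * K * W := by
        rw [div_mul_eq_mul_div, div_mul_eq_mul_div, le_div_iff₀ h1γ]
        nlinarith [hMbound]
end

section
/- Let M_src and M_tar be MDPs differing only in dynamics, with |r| ≤ r_max and γ ∈ [0,1). Let π*_src and π*_tar be optimal policies of M_src and M_tar, respectively. Then |J_{M_src}(π*_src) − J_{M_tar}(π*_tar)| ≤ (2 r_max / (1−γ)²) · sup_{s,a} D_TV(P_src(·|s,a), P_tar(·|s,a)). -/
lemma abs_ciSup_sub_ciSup' {A : Type} [Fintype A] [Nonempty A]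
    (f g : A → ℝ) (c : ℝ) (h : ∀ a, |f a - g a| ≤ c) :
    |(⨆ a, f a) - ⨆ a, g a| ≤ c := by
  have bf : BddAbove (Set.range f) := (Set.finite_range f).bddAbove
  have bg : BddAbove (Set.range g) := (Set.finite_range g).bddAbove
  rw [abs_sub_le_iff]
  constructor
  · have h1 : (⨆ a, f a) ≤ (⨆ a, g a) + c := by
      refine ciSup_le fun a => ?_
      have h2 := abs_le.mp (h a)
      have h3 : g a ≤ ⨆ a, g a := le_ciSup bg a
      linarith [h2.2]
    linarith
  · have h1 : (⨆ a, g a) ≤ (⨆ a, f a) + c := by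
      refine ciSup_le fun a => ?_
      have h2 := abs_le.mp (h a)
      have h3 : f a ≤ ⨆ a, f a := le_ciSup bf a
      linarith [h2.1]
    linarith

/-- Optimal return gap across dynamics shift: the returns of the respective optimal
policies of two MDPs differing only in dynamics are `2 r_max/(1−γ)²`-close in the
sup TV distance of the kernels. -/
theorem stmt_16
    {S A : Type} [Fintype S] [Fintype A] [Nonempty S] [Nonempty A]
    (Psrc Ptar : S → A → S → ℝ)
    (hPsrc : ∀ s a, (∀ s', 0 ≤ Psrc s a s') ∧ ∑ s', Psrc s a s' = 1)
    (hPtar : ∀ s a, (∀ s', 0 ≤ Ptar s a s') ∧ ∑ s', Ptar s a s' = 1)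
    (r : S → A → ℝ) (rmax : ℝ) (hr : ∀ s a, |r s a| ≤ rmax)
    (ρ : S → ℝ) (hρ0 : ∀ s, 0 ≤ ρ s) (hρ1 : ∑ s, ρ s = 1)
    (γ : ℝ) (hγ0 : 0 ≤ γ) (hγ1 : γ < 1)
    -- optimal value functions (Bellman optimality) and their bounds
    (Vsrc Vtar : S → ℝ)
    (hVsrc : ∀ s, Vsrc s = ⨆ a : A, (r s a + γ * ∑ s', Psrc s a s' * Vsrc s'))
    (hVtar : ∀ s, Vtar s = ⨆ a : A, (r s a + γ * ∑ s', Ptar s a s' * Vtar s'))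
    (hBsrc : ∀ s, |Vsrc s| ≤ rmax / (1 - γ))
    (hBtar : ∀ s, |Vtar s| ≤ rmax / (1 - γ))
    -- returns of the optimal policies
    (JsrcOpt JtarOpt : ℝ)
    (hJsrc : JsrcOpt = ∑ s, ρ s * Vsrc s)
    (hJtar : JtarOpt = ∑ s, ρ s * Vtar s) :
    |JsrcOpt - JtarOpt| ≤ (2 * rmax / (1 - γ) ^ 2) *
      ⨆ p : S × A, Dtv (Psrc p.1 p.2) (Ptar p.1 p.2) := by
  have hγ1' : 0 < 1 - γ := by linarith
  obtain ⟨s₀⟩ := (inferInstance : Nonempty S)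
  obtain ⟨a₀⟩ := (inferInstance : Nonempty A)
  have hrmax : 0 ≤ rmax := le_trans (abs_nonneg _) (hr s₀ a₀)
  set Vmax : ℝ := rmax / (1 - γ) with hVmax
  have hVmax0 : 0 ≤ Vmax := div_nonneg hrmax (le_of_lt hγ1')
  set D : ℝ := ⨆ p : S × A, Dtv (Psrc p.1 p.2) (Ptar p.1 p.2) with hDdef
  have bD : BddAbove (Set.range fun p : S × A => Dtv (Psrc p.1 p.2) (Ptar p.1 p.2)) :=
    (Set.finite_range _).bddAbove
  have hDtv_le : ∀ s a, Dtv (Psrc s a) (Ptar s a) ≤ D := fun s a =>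
    le_ciSup bD (s, a)
  have hDtv_nonneg : ∀ s a, 0 ≤ Dtv (Psrc s a) (Ptar s a) := by
    intro s a
    unfold Dtv
    positivity
  have hD0 : 0 ≤ D := le_trans (hDtv_nonneg s₀ a₀) (hDtv_le s₀ a₀)
  set Δ : ℝ := ⨆ s : S, |Vsrc s - Vtar s| with hΔdef
  have bΔ : BddAbove (Set.range fun s : S => |Vsrc s - Vtar s|) :=
    (Set.finite_range _).bddAbove
  have hΔs : ∀ s, |Vsrc s - Vtar s| ≤ Δ := fun s => le_ciSup bΔ s
  -- key per-state bound
  have key : ∀ s, |Vsrc s - Vtar s| ≤ γ * Δ + 2 * γ * Vmax * D := by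
    intro s
    rw [hVsrc s, hVtar s]
    refine abs_ciSup_sub_ciSup' _ _ _ fun a => ?_
    have h1 : (r s a + γ * ∑ s', Psrc s a s' * Vsrc s') -
        (r s a + γ * ∑ s', Ptar s a s' * Vtar s') =
        γ * ((∑ s', Psrc s a s' * (Vsrc s' - Vtar s')) +
          ∑ s', (Psrc s a s' - Ptar s a s') * Vtar s') := by
      rw [← Finset.sum_add_distrib]
      have he : ∑ s', (Psrc s a s' * (Vsrc s' - Vtar s') +
          (Psrc s a s' - Ptar s a s') * Vtar s') =
          ∑ s', (Psrc s a s' * Vsrc s' - Ptar s a s' * Vtar s') :=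
        Finset.sum_congr rfl fun s' _ => by ring
      rw [he, Finset.sum_sub_distrib]
      ring
    rw [h1, abs_mul, abs_of_nonneg hγ0]
    have h2 : |∑ s', Psrc s a s' * (Vsrc s' - Vtar s')| ≤ Δ := by
      calc |∑ s', Psrc s a s' * (Vsrc s' - Vtar s')|
          ≤ ∑ s', |Psrc s a s' * (Vsrc s' - Vtar s')| := Finset.abs_sum_le_sum_abs _ _
        _ ≤ ∑ s', Psrc s a s' * Δ := by
            refine Finset.sum_le_sum fun s' _ => ?_
            rw [abs_mul, abs_of_nonneg ((hPsrc s a).1 s')]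
            exact mul_le_mul_of_nonneg_left (hΔs s') ((hPsrc s a).1 s')
        _ = Δ := by rw [← Finset.sum_mul, (hPsrc s a).2, one_mul]
    have h3 : |∑ s', (Psrc s a s' - Ptar s a s') * Vtar s'| ≤ 2 * Vmax * D := by
      calc |∑ s', (Psrc s a s' - Ptar s a s') * Vtar s'|
          ≤ ∑ s', |(Psrc s a s' - Ptar s a s') * Vtar s'| := Finset.abs_sum_le_sum_abs _ _
        _ ≤ ∑ s', |Psrc s a s' - Ptar s a s'| * Vmax := by
            refine Finset.sum_le_sum fun s' _ => ?_
            rw [abs_mul]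
            exact mul_le_mul_of_nonneg_left (hBtar s') (abs_nonneg _)
        _ = (∑ s', |Psrc s a s' - Ptar s a s'|) * Vmax := by rw [Finset.sum_mul]
        _ = 2 * Dtv (Psrc s a) (Ptar s a) * Vmax := by unfold Dtv; ring
        _ ≤ 2 * D * Vmax := by
            apply mul_le_mul_of_nonneg_right _ hVmax0
            linarith [hDtv_le s a]
        _ = 2 * Vmax * D := by ring
    calc γ * |(∑ s', Psrc s a s' * (Vsrc s' - Vtar s')) +
          ∑ s', (Psrc s a s' - Ptar s a s') * Vtar s'|
        ≤ γ * (Δ + 2 * Vmax * D) := by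
          apply mul_le_mul_of_nonneg_left _ hγ0
          calc _ ≤ |∑ s', Psrc s a s' * (Vsrc s' - Vtar s')| +
              |∑ s', (Psrc s a s' - Ptar s a s') * Vtar s'| := abs_add_le _ _
            _ ≤ Δ + 2 * Vmax * D := add_le_add h2 h3
      _ = γ * Δ + 2 * γ * Vmax * D := by ring
  have hΔle : Δ ≤ γ * Δ + 2 * γ * Vmax * D := ciSup_le key
  have hΔbound : Δ ≤ 2 * rmax / (1 - γ) ^ 2 * D := by
    have h4 : Δ * (1 - γ) ≤ 2 * γ * Vmax * D := by nlinarith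
    have h5 : 2 * γ * Vmax * D ≤ 2 * Vmax * D := by
      have hvd := mul_nonneg hVmax0 hD0
      nlinarith
    have h6 : Δ ≤ 2 * Vmax * D / (1 - γ) := by
      rw [le_div_iff₀ hγ1']
      linarith
    calc Δ ≤ 2 * Vmax * D / (1 - γ) := h6
      _ = 2 * rmax / (1 - γ) ^ 2 * D := by
          have hne : (1 - γ) ≠ 0 := ne_of_gt hγ1'
          rw [hVmax, sq]
          field_simp
  -- conclude
  rw [hJsrc, hJtar, ← Finset.sum_sub_distrib]
  calc |∑ s, (ρ s * Vsrc s - ρ s * Vtar s)|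
      ≤ ∑ s, |ρ s * Vsrc s - ρ s * Vtar s| := Finset.abs_sum_le_sum_abs _ _
    _ = ∑ s, ρ s * |Vsrc s - Vtar s| := by
        refine Finset.sum_congr rfl fun s _ => ?_
        rw [← mul_sub, abs_mul, abs_of_nonneg (hρ0 s)]
    _ ≤ ∑ s, ρ s * Δ := by
        refine Finset.sum_le_sum fun s _ => ?_
        exact mul_le_mul_of_nonneg_left (hΔs s) (hρ0 s)
    _ = Δ := by rw [← Finset.sum_mul, hρ1, one_mul]
    _ ≤ 2 * rmax / (1 - γ) ^ 2 * D := hΔbound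
end
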